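/- Let s, t be coprime integers greater than 1. For every w in the group W_s × W_t (affine symmetric groups acting on partitions at levels t and s respectively) and every partition λ, the quantity |λ| − |core_s(λ)| − |core_t(λ)| is invariant: it equals |wλ| − |core_s(wλ)| − |core_t(wλ)|. -/

import Mathlib

/-- A partition, given as a weakly decreasing finitely-supported sequence of
natural numbers (`parts 0` is the first part). -/
structure Partition' where
  parts : ℕ →₀ ℕ
  antitone : ∀ ⦃i j : ℕ⦄, i ≤ j → parts j ≤ parts i

namespace Partition'

/-- The size `|λ|` of a partition. -/
def size (l : Partition') : ℕ := l.parts.sum fun _ v => v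

/-- The beta-set `β(λ) = { λ_r − r : r ≥ 1 }` (here 0-indexed). -/
def betaSet (l : Partition') : Set ℤ :=
  Set.range fun r : ℕ => (l.parts r : ℤ) - (r + 1)

/-- `RemoveHook h l m` : `m` is obtained from `l` by removing a rim `h`-hook;
in beta-set terms, an element `b` of `β(l)` is replaced by `b − h ∉ β(l)`. -/
def RemoveHook (h : ℕ) (l m : Partition') : Prop :=
  ∃ b : ℤ, b ∈ l.betaSet ∧ b - (h : ℤ) ∉ l.betaSet ∧
    m.betaSet = insert (b - (h : ℤ)) (l.betaSet \ {b})

/-- `l` is an `s`-core: no rim `s`-hook can be removed. -/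
def IsCore (s : ℕ) (l : Partition') : Prop := ∀ m : Partition', ¬ RemoveHook s l m

/-- `c` is the `s`-core of `l`: it is obtained from `l` by repeatedly removing
rim `s`-hooks, and is itself an `s`-core. -/
def HasCore (s : ℕ) (l c : Partition') : Prop :=
  Relation.ReflTransGen (RemoveHook s) l c ∧ IsCore s c

/-- `IsConj l m` : `m` is the conjugate partition of `l`. -/
def IsConj (l m : Partition') : Prop :=
  ∀ r : ℕ, m.parts r = Set.ncard {c : ℕ | r + 1 ≤ l.parts c}

end Partition'

/-- The region `U_x = { x + as + bt : a, b > 0 }`. -/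
def UpSet (s t : ℕ) (x : ℤ) : Set ℤ :=
  {n : ℤ | ∃ a b : ℕ, 0 < a ∧ 0 < b ∧ n = x + (a : ℤ) * s + (b : ℤ) * t}

/-- The region `L_x = { x − as − bt : a, b ≥ 0 }`. -/
def LowSet (s t : ℕ) (x : ℤ) : Set ℤ :=
  {n : ℤ | ∃ a b : ℕ, n = x - (a : ℤ) * s - (b : ℤ) * t}

/-- `x` is a pinch-point for `l` : `L_x ⊆ β(l)` and `β(l) ∩ U_x = ∅`. -/
def PinchPoint (s t : ℕ) (x : ℤ) (l : Partition') : Prop :=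
  LowSet s t x ⊆ l.betaSet ∧ l.betaSet ∩ UpSet s t x = ∅

/-- The generator `w_i` of the affine symmetric group `W_s` in its level-`t`
action on `ℤ` : `n ↦ n + t` if `n ≡ (i−1)t − (s−1)(t−1)/2 (mod s)`,
`n ↦ n − t` if `n ≡ it − (s−1)(t−1)/2 (mod s)`, and `n ↦ n` otherwise. -/
def wgen (s t : ℕ) (i : ℤ) : ℤ → ℤ := fun n =>
  if (s : ℤ) ∣ (n + ((s : ℤ) - 1) * ((t : ℤ) - 1) / 2 - (i - 1) * t) then n + t
  else if (s : ℤ) ∣ (n + ((s : ℤ) - 1) * ((t : ℤ) - 1) / 2 - i * t) then n - t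
  else n

/-- The monoid of maps `ℤ → ℤ` generated by the `wgen s t i`.  Since each
generator is an involution, this is the image of the level-`t` action
of the affine symmetric group `W_s` on `ℤ`. -/
def WMon (s t : ℕ) : Submonoid (Function.End ℤ) :=
  Submonoid.closure {f | ∃ i : ℤ, f = wgen s t i}

/-- `l` is `(s,t)`-minimal: no partition of smaller size has the same
`s`-core and `t`-core. -/
def MinimalPart (s t : ℕ) (l : Partition') : Prop :=
  ∀ (m σ τ : Partition'), Partition'.HasCore s l σ → Partition'.HasCore t l τ →
    Partition'.HasCore s m σ → Partition'.HasCore t m τ → l.size ≤ m.size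

/-!
In the beta-set of `λ`, a gap `x` below a bead `y` is a hook of length `y - x`, so `hookCount h`,
the number of such pairs with `h ∣ y - x`, is the `h`-weight. Removing a rim `h`-hook moves a bead
down by `h` into a gap: this lowers `|λ|` by `h` and `hookCount h` by one, so
`coreSize h = |λ| - h · hookCount h` is the size of the `h`-core, and the quantity of the theorem
is `|λ| - coreSize s - coreSize t = s · hookCount s - coreSize t`.

A generator of `W_s` at level `t` is a product of the commuting transpositions `(a, a + t)`, with
`a` running over one residue class modulo `s`. It preserves differences inside each residue
class modulo `s`, hence `hookCount s`; and each transposition either fixes the beta-set or moves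
one bead by `t` into a gap, which preserves `coreSize t`. The quantity is symmetric in `s` and `t`,
so `W_t` acting at level `s` preserves it too.
-/

open Set Function

def IsBeadSet (B : Set ℤ) : Prop := BddAbove B ∧ ∃ m, Iic m ⊆ B

-- For a beta-set, `beadSize` is the size of the partition: a bead at `n ≥ 0` contributes
-- `n + 1` and a gap at `n < 0` contributes `-(n + 1)`.
noncomputable def beadWeight (B : Set ℤ) (n : ℤ) : ℤ :=
  B.indicator (· + 1) n - (Iio 0).indicator (· + 1) n

noncomputable def beadSize (B : Set ℤ) : ℤ := ∑ᶠ n, beadWeight B n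

def hookPairs (h : ℕ) (B : Set ℤ) : Set (ℤ × ℤ) :=
  {p | p.1 ∉ B ∧ p.2 ∈ B ∧ p.1 < p.2 ∧ (h : ℤ) ∣ p.2 - p.1}

noncomputable def hookCount (h : ℕ) (B : Set ℤ) : ℕ := (hookPairs h B).ncard

noncomputable def coreSize (h : ℕ) (B : Set ℤ) : ℤ := beadSize B - h * hookCount h B

noncomputable def excess (s t : ℕ) (B : Set ℤ) : ℤ := beadSize B - coreSize s B - coreSize t B

namespace IsBeadSet

variable {B : Set ℤ}

theorem finite_support_beadWeight (hB : IsBeadSet B) : (support (beadWeight B)).Finite := by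
  obtain ⟨⟨M, hM⟩, m, hm⟩ := hB
  refine (finite_Icc (min m 0) (max M 0)).subset fun n hn => ?_
  by_contra hout
  rw [mem_Icc, not_and_or, not_le, not_le] at hout
  apply hn
  rcases hout with h | h
  · have hnB : n ∈ B := hm (mem_Iic.2 (by omega))
    simp [beadWeight, indicator_of_mem hnB, show n < 0 by omega]
  · have hnB : n ∉ B := fun hn => by have := hM hn; omega
    simp [beadWeight, indicator_of_notMem hnB, show ¬ n < 0 by omega]

theorem finite_hookPairs (hB : IsBeadSet B) (h : ℕ) : (hookPairs h B).Finite := by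
  obtain ⟨⟨M, hM⟩, m, hm⟩ := hB
  refine ((finite_Icc m M).prod (finite_Icc m M)).subset ?_
  rintro ⟨x, y⟩ ⟨hx, hy, hxy, -⟩
  have hmx : m < x := lt_of_not_ge fun h => hx (hm h)
  have hyM := hM hy
  exact ⟨mem_Icc.2 ⟨by omega, by omega⟩, mem_Icc.2 ⟨by omega, hyM⟩⟩

theorem preimage {σ : ℤ → ℤ} {d : ℤ} (hB : IsBeadSet B)
    (hσ : ∀ n, n - d ≤ σ n ∧ σ n ≤ n + d) : IsBeadSet (σ ⁻¹' B) := by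
  obtain ⟨⟨M, hM⟩, m, hm⟩ := hB
  refine ⟨⟨M + d, fun n hn => ?_⟩, m - d, fun n hn => hm ?_⟩
  · have := hM hn
    have := hσ n
    omega
  · have := hσ n
    rw [mem_Iic] at hn ⊢
    omega

theorem preimage_swap (hB : IsBeadSet B) (a c : ℤ) : IsBeadSet (Equiv.swap a c ⁻¹' B) :=
  hB.preimage (d := |a - c|) fun n => by
    rw [Equiv.swap_apply_def]
    split_ifs with h1 h2 <;> [rw [h1]; rw [h2]; skip] <;> constructor <;>
      linarith [le_abs_self (a - c), neg_abs_le (a - c), abs_sub_comm a c, abs_nonneg (a - c)]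

end IsBeadSet

theorem preimage_swap_eq_self {B : Set ℤ} {a c : ℤ} (h : a ∈ B ↔ c ∈ B) :
    Equiv.swap a c ⁻¹' B = B := by
  ext n
  rw [mem_preimage, Equiv.swap_apply_def]
  split_ifs with h1 h2 <;> subst_vars <;> tauto

theorem preimage_swap_eq_insert_sdiff {B : Set ℤ} {a c : ℤ} (ha : a ∉ B) (hc : c ∈ B) :
    Equiv.swap a c ⁻¹' B = insert a (B \ {c}) := by
  have hac : a ≠ c := fun h => ha (h ▸ hc)
  ext n
  simp only [mem_preimage, Equiv.swap_apply_def, mem_insert_iff, mem_sdiff, mem_singleton_iff]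
  split_ifs with h1 h2 <;> subst_vars <;> tauto

theorem beadSize_preimage_swap {B : Set ℤ} (hB : IsBeadSet B) {a c : ℤ} (ha : a ∉ B)
    (hc : c ∈ B) : beadSize (Equiv.swap a c ⁻¹' B) = beadSize B + (a - c) := by
  classical
  have hweight : ∀ n, beadWeight (Equiv.swap a c ⁻¹' B) n =
      beadWeight B n + ((if n = a then a + 1 else 0) - if n = c then c + 1 else 0) := by
    intro n
    simp only [beadWeight, indicator_apply, mem_preimage, Equiv.swap_apply_def]
    split_ifs <;> subst_vars <;> first | ring1 | tauto
  set W : Finset ℤ := (hB.finite_support_beadWeight.union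
    (hB.preimage_swap a c).finite_support_beadWeight).toFinset ∪ {a, c}
  have hWB : support (beadWeight B) ⊆ W := fun n hn => by simp [W, hn]
  have hWB' : support (beadWeight (Equiv.swap a c ⁻¹' B)) ⊆ W := fun n hn => by simp [W, hn]
  rw [beadSize, beadSize, finsum_eq_sum_of_support_subset _ hWB',
    finsum_eq_sum_of_support_subset _ hWB, Finset.sum_congr rfl fun n _ => hweight n,
    Finset.sum_add_distrib, Finset.sum_sub_distrib, Finset.sum_ite_eq', Finset.sum_ite_eq',
    if_pos (by simp [W]), if_pos (by simp [W])]
  ring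

theorem beadSize_finset_union_Iio {S : Finset ℤ} {N : ℕ} (hS : ∀ n ∈ S, -(N : ℤ) ≤ n) :
    beadSize (↑S ∪ Iio (-(N : ℤ))) =
      ∑ n ∈ S, (n + 1) - ∑ n ∈ Finset.Ico (-(N : ℤ)) 0, (n + 1) := by
  classical
  have hw : beadWeight (↑S ∪ Iio (-(N : ℤ))) = fun n =>
      (S : Set ℤ).indicator (· + 1) n -
        (Finset.Ico (-(N : ℤ)) 0 : Set ℤ).indicator (· + 1) n := by
    funext n
    by_cases hn : n ∈ S
    · have := hS n hn
      simp only [beadWeight, indicator_apply, mem_union, Finset.mem_coe, mem_Iio, Finset.mem_Ico,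
        hn, true_or, if_true]
      split_ifs <;> omega
    · simp only [beadWeight, indicator_apply, mem_union, Finset.mem_coe, mem_Iio, Finset.mem_Ico,
        hn, false_or, if_false]
      split_ifs <;> omega
  rw [beadSize, hw, finsum_sub_distrib (S.finite_toSet.subset support_indicator_subset)
    ((Finset.finite_toSet _).subset support_indicator_subset), ← finsum_mem_def,
    ← finsum_mem_def, finsum_mem_coe_finset, finsum_mem_coe_finset]

theorem ncard_preimage_prodMap_of_involutive {α : Type*} {σ : α → α} (hσ : Involutive σ)
    (P : Set (α × α)) : (Prod.map σ σ ⁻¹' P).ncard = P.ncard :=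
  ncard_preimage_of_injective_subset_range (hσ.injective.prodMap hσ.injective)
    ((hσ.surjective.prodMap hσ.surjective).range_eq ▸ subset_univ P)

theorem hookCount_preimage_of_sub_eq {h : ℕ} {B : Set ℤ} {σ : ℤ → ℤ}
    (hσ : Involutive σ) (hsub : ∀ x y, (h : ℤ) ∣ y - x → σ y - σ x = y - x) :
    hookCount h (σ ⁻¹' B) = hookCount h B := by
  have hpairs : hookPairs h (σ ⁻¹' B) = Prod.map σ σ ⁻¹' hookPairs h B := by
    ext ⟨x, y⟩
    simp only [hookPairs, mem_ofPred_eq, mem_preimage, Prod.map_apply]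
    constructor
    · rintro ⟨hx, hy, hxy, hd⟩
      have e := hsub x y hd
      exact ⟨hx, hy, by omega, e ▸ hd⟩
    · rintro ⟨hx, hy, hxy, hd⟩
      have e := hsub (σ x) (σ y) hd
      rw [hσ x, hσ y] at e
      exact ⟨hx, hy, by omega, e ▸ hd⟩
  rw [hookCount, hookCount, hpairs, ncard_preimage_prodMap_of_involutive hσ]

theorem hookCount_preimage_swap {h : ℕ} (hh : 0 < h) {B : Set ℤ} (hB : IsBeadSet B) {a : ℤ}
    (ha : a ∉ B) (hah : a + h ∈ B) :
    hookCount h (Equiv.swap a (a + h) ⁻¹' B) + 1 = hookCount h B := by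
  set τ := Equiv.swap a (a + h)
  have hpairs :
      hookPairs h (τ ⁻¹' B) = Prod.map τ τ ⁻¹' (hookPairs h B \ {(a, a + h)}) := by
    ext ⟨x, y⟩
    simp only [hookPairs, mem_sdiff, mem_ofPred_eq, mem_preimage, Prod.map_apply,
      mem_singleton_iff, Prod.mk.injEq]
    rcases eq_or_ne x a with rfl | hxa
    · simp [τ, hah]
    rcases eq_or_ne y (a + h) with rfl | hyah
    · simp [τ, ha]
    rcases eq_or_ne x (a + h) with rfl | hxah <;> rcases eq_or_ne a y with rfl | hay
    · simp [τ]
    · rw [Equiv.swap_apply_right, Equiv.swap_apply_of_ne_of_ne hay.symm hyah,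
        show y - (a + h) = y - a - h by ring, dvd_sub_self_right]
      refine ⟨fun ⟨h1, h2, h3, h4⟩ => ⟨⟨h1, h2, by omega, h4⟩, by omega⟩,
        fun ⟨⟨h1, h2, h3, h4⟩, _⟩ => ⟨h1, h2, ?_, h4⟩⟩
      have := Int.le_of_dvd (by omega) h4
      omega
    · rw [Equiv.swap_apply_of_ne_of_ne hxa hxah, Equiv.swap_apply_left,
        show a + h - x = a - x + h by ring, dvd_add_self_right]
      refine ⟨fun ⟨h1, h2, h3, h4⟩ => ⟨⟨h1, h2, by omega, h4⟩, by omega⟩,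
        fun ⟨⟨h1, h2, h3, h4⟩, _⟩ => ⟨h1, h2, ?_, h4⟩⟩
      by_contra hle
      have := Int.le_of_dvd (by omega) (dvd_add_self_right.2 h4)
      omega
    · rw [Equiv.swap_apply_of_ne_of_ne hxa hxah, Equiv.swap_apply_of_ne_of_ne hay.symm hyah]
      tauto
  have hmem : (a, a + h) ∈ hookPairs h B := ⟨ha, hah, by omega, by simp⟩
  rw [hookCount, hookCount, hpairs,
    ncard_preimage_prodMap_of_involutive (Equiv.swap_apply_self _ _),
    ncard_sdiff_singleton_add_one hmem (hB.finite_hookPairs h)]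

theorem coreSize_preimage_swap {h : ℕ} (hh : 0 < h) {B : Set ℤ} (hB : IsBeadSet B) (a : ℤ) :
    coreSize h (Equiv.swap a (a + h) ⁻¹' B) = coreSize h B := by
  set τ := Equiv.swap a (a + h)
  have hτ : Involutive τ := Equiv.swap_apply_self _ _
  have hdown : ∀ C, IsBeadSet C → a ∉ C → a + h ∈ C →
      coreSize h (τ ⁻¹' C) = coreSize h C := by
    intro C hC ha hah
    have e := hookCount_preimage_swap hh hC ha hah
    rw [coreSize, coreSize, beadSize_preimage_swap hC ha hah, ← e]
    push_cast
    ring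
  by_cases ha : a ∈ B <;> by_cases hah : a + h ∈ B
  · rw [preimage_swap_eq_self (iff_of_true ha hah)]
  · have e := hdown (τ ⁻¹' B) (hB.preimage_swap _ _) (by simpa [τ] using hah)
      (by simpa [τ] using ha)
    rwa [← preimage_comp, hτ.comp_self, preimage_id, eq_comm] at e
  · exact hdown B hB ha hah
  · rw [preimage_swap_eq_self (iff_of_false ha hah)]

open Classical in
/-- For `A` with `A ∩ (A + d) = ∅`, the product of the commuting transpositions
`(a, a + d)`, `a ∈ A`. -/
noncomputable def swapPairs (d : ℤ) (A : Set ℤ) (n : ℤ) : ℤ :=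
  if n ∈ A then n + d else if n - d ∈ A then n - d else n

section swapPairs

variable {d : ℤ} {A : Set ℤ}

@[simp]
theorem swapPairs_empty : swapPairs d ∅ = id := by
  funext n
  simp [swapPairs]

theorem swapPairs_eq_or (n : ℤ) :
    swapPairs d A n = n + d ∨ swapPairs d A n = n - d ∨ swapPairs d A n = n := by
  unfold swapPairs
  split_ifs <;> simp

theorem swapPairs_involutive (hA : ∀ a ∈ A, a + d ∉ A) : Involutive (swapPairs d A) := by
  intro n
  by_cases h1 : n ∈ A
  · have h2 : n + d ∉ A := hA n h1
    simp [swapPairs, h1, h2]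
  by_cases h2 : n - d ∈ A
  · simp [swapPairs, h1, h2]
  · simp [swapPairs, h1, h2]

theorem IsBeadSet.preimage_swapPairs {B : Set ℤ} (hB : IsBeadSet B) (hd : 0 ≤ d) :
    IsBeadSet (swapPairs d A ⁻¹' B) :=
  hB.preimage (d := d) fun n => by
    rcases swapPairs_eq_or (d := d) (A := A) n with h | h | h <;> omega

theorem swapPairs_sub_swapPairs {s : ℤ} (hA : ∀ x y, s ∣ y - x → (x ∈ A ↔ y ∈ A))
    {x y : ℤ} (hxy : s ∣ y - x) : swapPairs d A y - swapPairs d A x = y - x := by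
  have h1 := hA x y hxy
  have h2 := hA (x - d) (y - d) (by simpa using hxy)
  unfold swapPairs
  split_ifs <;> first | ring1 | tauto

theorem swapPairs_insert {a : ℤ} (ha : a ∉ A)
    (hA : ∀ b ∈ insert a A, b + d ∉ insert a A) :
    swapPairs d (insert a A) = swapPairs d A ∘ Equiv.swap a (a + d) := by
  have had : a + d ∉ insert a A := hA a (mem_insert a A)
  have hsub : a - d ∉ A := fun h => hA (a - d) (mem_insert_of_mem a h) (by simp)
  rw [mem_insert_iff, not_or] at had
  funext n
  rw [comp_apply, Equiv.swap_apply_def]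
  split_ifs with h1 h2
  · subst h1; simp [swapPairs, ha, had.2]
  · subst h2; simp [swapPairs, ha, hsub, had.1, had.2]
  · have h3 : n - d ≠ a := fun h => h2 (by omega)
    have e1 : n ∈ insert a A ↔ n ∈ A := by simp [h1]
    have e2 : n - d ∈ insert a A ↔ n - d ∈ A := by simp [h3]
    unfold swapPairs
    split_ifs <;> tauto

end swapPairs

section coreSize

variable {d : ℕ} {B : Set ℤ}

theorem coreSize_preimage_swapPairs_finset (hd : 0 < d) (hB : IsBeadSet B) (F : Finset ℤ)
    (hF : ∀ a ∈ F, a + d ∉ F) : coreSize d (swapPairs d F ⁻¹' B) = coreSize d B := by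
  induction F using Finset.induction_on with
  | empty => simp
  | insert a F ha ih =>
    have hF' : ∀ b ∈ F, b + d ∉ F := fun b hb hbd =>
      hF b (Finset.mem_insert_of_mem hb) (Finset.mem_insert_of_mem hbd)
    rw [Finset.coe_insert, swapPairs_insert (by simpa using ha) (by simpa using hF),
      preimage_comp, coreSize_preimage_swap hd (hB.preimage_swapPairs (by omega)), ih hF']

theorem coreSize_preimage_swapPairs (hd : 0 < d) (hB : IsBeadSet B) {A : Set ℤ}
    (hA : ∀ a ∈ A, a + d ∉ A) : coreSize d (swapPairs d A ⁻¹' B) = coreSize d B := by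
  obtain ⟨⟨M, hM⟩, m, hm⟩ := hB
  -- outside `[m - d, M]` both ends of a pair lie in `B` or both lie outside it
  have hfin : (A ∩ Icc (m - d) M).Finite := (finite_Icc _ _).inter_of_right A
  set F := hfin.toFinset
  have hFA : ∀ n, n ∈ F ↔ n ∈ A ∧ m - d ≤ n ∧ n ≤ M := by simp [F]
  have hwin : swapPairs d A ⁻¹' B = swapPairs d F ⁻¹' B := by
    ext n
    have key : ∀ k, ¬(m - d ≤ k ∧ k ≤ M) → (k + d ∈ B ↔ k ∈ B) := fun k hk => by
      by_cases hkm : k < m - d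
      · exact iff_of_true (hm (by simp; omega)) (hm (by simp; omega))
      · exact iff_of_false (fun h => by have := hM h; omega) (fun h => by have := hM h; omega)
    have hsep : n ∈ A → n - d ∉ A := fun hn hnd => hA _ hnd (by simpa using hn)
    simp only [mem_preimage, swapPairs]
    split_ifs <;> simp only [Finset.mem_coe, hFA] at * <;>
      first
      | rfl
      | (exfalso; tauto)
      | exact key n (by tauto)
      | simpa using (key (n - d) (by tauto)).symm
  rw [hwin, coreSize_preimage_swapPairs_finset hd ⟨⟨M, hM⟩, m, hm⟩ F
    fun a ha had => hA a ((hFA a).1 ha).1 ((hFA _).1 had).1]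

end coreSize

theorem excess_comm (s t : ℕ) (B : Set ℤ) : excess s t B = excess t s B := by
  unfold excess
  ring

theorem excess_eq_sub_coreSize (s t : ℕ) (B : Set ℤ) :
    excess s t B = s * hookCount s B - coreSize t B := by
  unfold excess coreSize
  ring

def wgenPairStarts (s t : ℕ) (i : ℤ) : Set ℤ :=
  {n | (s : ℤ) ∣ n + ((s : ℤ) - 1) * ((t : ℤ) - 1) / 2 - (i - 1) * t}

section wgen

variable {s t : ℕ}

theorem wgen_eq_swapPairs (i : ℤ) : wgen s t i = swapPairs t (wgenPairStarts s t i) := by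
  funext n
  have e : n - t + ((s : ℤ) - 1) * ((t : ℤ) - 1) / 2 - (i - 1) * t =
      n + ((s : ℤ) - 1) * ((t : ℤ) - 1) / 2 - i * t := by ring
  simp only [wgen, swapPairs, wgenPairStarts, mem_ofPred_eq, e]

theorem wgenPairStarts_iff_of_dvd (i : ℤ) {x y : ℤ} (hxy : (s : ℤ) ∣ y - x) :
    x ∈ wgenPairStarts s t i ↔ y ∈ wgenPairStarts s t i := by
  simp only [wgenPairStarts, mem_ofPred_eq]
  rw [show y + ((s : ℤ) - 1) * ((t : ℤ) - 1) / 2 - (i - 1) * t =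
    x + ((s : ℤ) - 1) * ((t : ℤ) - 1) / 2 - (i - 1) * t + (y - x) by ring]
  exact (dvd_add_left hxy).symm

theorem add_notMem_wgenPairStarts (hs : 1 < s) (hst : s.Coprime t) (i : ℤ) :
    ∀ a ∈ wgenPairStarts s t i, a + t ∉ wgenPairStarts s t i := by
  intro a ha hat
  have hdvd : (s : ℤ) ∣ t := by
    have h := dvd_sub (show (s : ℤ) ∣ _ from hat) (show (s : ℤ) ∣ _ from ha)
    rwa [show ∀ x y : ℤ, a + t + x - y - (a + x - y) = t by intro x y; ring] at h
  have := hst.eq_one_of_dvd (Int.natCast_dvd_natCast.1 hdvd)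
  omega

theorem IsBeadSet.excess_image_wgen (hs : 1 < s) (ht : 1 < t) (hst : s.Coprime t)
    {B : Set ℤ} (hB : IsBeadSet B) (i : ℤ) :
    IsBeadSet (wgen s t i '' B) ∧ excess s t (wgen s t i '' B) = excess s t B := by
  have hsep := add_notMem_wgenPairStarts hs hst i
  have hinv := swapPairs_involutive hsep
  rw [wgen_eq_swapPairs, hinv.image_eq_preimage_symm]
  refine ⟨hB.preimage_swapPairs (by positivity), ?_⟩
  rw [excess_eq_sub_coreSize, excess_eq_sub_coreSize,
    coreSize_preimage_swapPairs (by omega) hB hsep,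
    hookCount_preimage_of_sub_eq hinv
      fun x y hxy => swapPairs_sub_swapPairs (fun x y => wgenPairStarts_iff_of_dvd i) hxy]

theorem IsBeadSet.excess_image_of_mem_wMon (hs : 1 < s) (ht : 1 < t) (hst : s.Coprime t)
    {u : Function.End ℤ} (hu : u ∈ WMon s t) {B : Set ℤ} (hB : IsBeadSet B) :
    IsBeadSet (u '' B) ∧ excess s t (u '' B) = excess s t B := by
  induction hu using Submonoid.closure_induction generalizing B with
  | mem f hf =>
    obtain ⟨i, rfl⟩ := hf
    exact hB.excess_image_wgen hs ht hst i
  | one =>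
    rw [Function.End.one_def, image_id]
    exact ⟨hB, rfl⟩
  | mul f g _ _ ihf ihg =>
    obtain ⟨hgB, hg⟩ := ihg hB
    obtain ⟨hfgB, hf⟩ := ihf hgB
    rw [show (f * g) '' B = f '' (g '' B) from image_comp _ _ _]
    exact ⟨hfgB, hf.trans hg⟩

end wgen

theorem Finset.add_le_orderEmbOfFin (S : Finset ℤ) {N : ℕ} (hcard : S.card = N)
    {L : ℤ} (hS : ∀ n ∈ S, L ≤ n) (k : ℕ) (hk : k < N) :
    L + k ≤ S.orderEmbOfFin hcard ⟨k, hk⟩ := by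
  induction k with
  | zero => simpa using hS _ (S.orderEmbOfFin_mem hcard _)
  | succ k ih =>
    have h1 := ih (by omega)
    have h2 := (S.orderEmbOfFin hcard).strictMono
      (Fin.mk_lt_mk.2 (Nat.lt_succ_self k) : (⟨k, by omega⟩ : Fin N) < ⟨k + 1, hk⟩)
    push_cast
    omega

namespace Partition'

def bead (l : Partition') (r : ℕ) : ℤ := l.parts r - (r + 1)

theorem betaSet_eq_range_bead (l : Partition') : l.betaSet = range l.bead := rfl

theorem bead_strictAnti (l : Partition') : StrictAnti l.bead :=
  strictAnti_nat_of_succ_lt fun r => by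
    have := l.antitone (Nat.le_add_right r 1)
    simp only [bead]
    push_cast
    omega

theorem exists_parts_eq_zero (l : Partition') : ∃ N, ∀ r, N ≤ r → l.parts r = 0 := by
  refine ⟨l.parts.support.sup id + 1, fun r hr => ?_⟩
  by_contra h
  have := Finset.le_sup (f := id) (Finsupp.mem_support_iff.2 h)
  simp only [id] at this
  omega

section truncation

variable {l : Partition'} {N : ℕ}

theorem neg_le_bead_of_lt {r : ℕ} (hr : r < N) : -(N : ℤ) ≤ l.bead r := by
  simp only [bead]
  omega

theorem neg_le_of_mem_image_bead {n : ℤ} (hn : n ∈ (Finset.range N).image l.bead) :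
    -(N : ℤ) ≤ n := by
  obtain ⟨r, hr, rfl⟩ := Finset.mem_image.1 hn
  exact neg_le_bead_of_lt (Finset.mem_range.1 hr)

theorem card_image_bead (l : Partition') (N : ℕ) :
    ((Finset.range N).image l.bead).card = N := by
  rw [Finset.card_image_of_injective _ l.bead_strictAnti.injective, Finset.card_range]

theorem betaSet_eq_union (hN : ∀ r, N ≤ r → l.parts r = 0) :
    l.betaSet = ↑((Finset.range N).image l.bead) ∪ Iio (-(N : ℤ)) := by
  ext n
  simp only [betaSet_eq_range_bead, mem_range, Finset.coe_image, Finset.coe_range, mem_union,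
    mem_image, mem_Iio]
  constructor
  · rintro ⟨r, rfl⟩
    by_cases hr : r < N
    · exact Or.inl ⟨r, hr, rfl⟩
    · right
      simp only [bead, hN r (by omega)]
      omega
  · rintro (⟨r, -, rfl⟩ | hn)
    · exact ⟨r, rfl⟩
    · refine ⟨(-n - 1).toNat, ?_⟩
      simp only [bead, hN (-n - 1).toNat (by omega)]
      omega

theorem size_eq_sum_range (hN : ∀ r, N ≤ r → l.parts r = 0) :
    l.size = ∑ r ∈ Finset.range N, l.parts r :=
  Finsupp.sum_of_support_subset _ (fun r hr => Finset.mem_range.2 <| by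
    by_contra h
    exact Finsupp.mem_support_iff.1 hr (hN r (by omega))) _ fun _ _ => rfl

end truncation

theorem isBeadSet_betaSet (l : Partition') : IsBeadSet l.betaSet := by
  obtain ⟨N, hN⟩ := l.exists_parts_eq_zero
  rw [betaSet_eq_union hN]
  exact ⟨(Finset.bddAbove _).union bddAbove_Iio, -N - 1,
    fun n hn => Or.inr (by simp at hn ⊢; omega)⟩

theorem size_eq_beadSize (l : Partition') : (l.size : ℤ) = beadSize l.betaSet := by
  obtain ⟨N, hN⟩ := l.exists_parts_eq_zero
  have hIco :
      ∑ n ∈ Finset.Ico (-(N : ℤ)) 0, (n + 1) = -∑ r ∈ Finset.range N, (r : ℤ) := by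
    rw [← Finset.sum_neg_distrib]
    refine Finset.sum_nbij' (fun n => (-n - 1).toNat) (fun r => -(r : ℤ) - 1) ?_ ?_ ?_ ?_ ?_ <;>
      intro n hn <;> simp at hn ⊢ <;> omega
  rw [betaSet_eq_union hN, beadSize_finset_union_Iio fun n => neg_le_of_mem_image_bead,
    size_eq_sum_range hN, Finset.sum_image fun r _ r' _ h => l.bead_strictAnti.injective h, hIco]
  push_cast
  simp only [bead, sub_neg_eq_add, ← Finset.sum_add_distrib]
  exact Finset.sum_congr rfl fun r _ => by ring

theorem exists_betaSet_eq_range {g : ℕ → ℤ} (hstep : ∀ r, g (r + 1) < g r)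
    (hlb : ∀ r : ℕ, -(r : ℤ) - 1 ≤ g r) {N : ℕ}
    (hN : ∀ r, N ≤ r → g r = -(r : ℤ) - 1) :
    ∃ l : Partition', l.betaSet = range g := by
  have hsupp : (support fun r => (g r + r + 1).toNat).Finite :=
    (finite_Iio N).subset fun r hr => by
      by_contra h
      simp [hN r (by simpa using h)] at hr
      omega
  refine ⟨⟨Finsupp.ofSupportFinite _ hsupp, antitone_nat_of_succ_le fun r =>
    Int.toNat_le_toNat (by have := hstep r; push_cast; omega)⟩, ?_⟩
  simp only [betaSet, Finsupp.ofSupportFinite_coe]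
  congr 1
  funext r
  have := hlb r
  omega

theorem exists_betaSet_eq (S : Finset ℤ) {N : ℕ} (hcard : S.card = N)
    (hS : ∀ n ∈ S, -(N : ℤ) ≤ n) :
    ∃ l : Partition', l.betaSet = ↑S ∪ Iio (-(N : ℤ)) := by
  have he := S.add_le_orderEmbOfFin hcard hS
  set e := S.orderEmbOfFin hcard
  -- `g r` is the `r`-th largest element of `S ∪ Iio (-N)`
  let g : ℕ → ℤ := fun r => if hr : r < N then e ⟨N - 1 - r, by omega⟩ else -(r : ℤ) - 1
  have hg_lb : ∀ r : ℕ, -(r : ℤ) - 1 ≤ g r := fun r => by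
    by_cases hr : r < N
    · have := he (N - 1 - r) (by omega)
      simp only [g, dif_pos hr]
      omega
    · simp [g, hr]
  have hg_step : ∀ r : ℕ, g (r + 1) < g r := fun r => by
    by_cases hr : r + 1 < N
    · simp only [g, dif_pos hr, dif_pos (show r < N by omega)]
      exact e.strictMono (Fin.mk_lt_mk.2 (by omega))
    · by_cases hr' : r < N
      · have := he 0 (by omega)
        have h0 : e ⟨N - 1 - r, by omega⟩ = e ⟨0, by omega⟩ :=
          congrArg e (Fin.ext (by simp; omega))
        simp only [g, dif_neg hr, dif_pos hr', h0]
        omega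
      · simp only [g, dif_neg hr, dif_neg hr']
        omega
  obtain ⟨l, hl⟩ := exists_betaSet_eq_range hg_step hg_lb (N := N) fun r hr => by
    simp only [g, dif_neg (show ¬ r < N by omega)]
  refine ⟨l, hl.trans ?_⟩
  ext n
  simp only [mem_range, mem_union, Finset.mem_coe, mem_Iio]
  constructor
  · rintro ⟨r, rfl⟩
    by_cases hr : r < N
    · simp only [g, dif_pos hr]
      exact Or.inl (S.orderEmbOfFin_mem hcard _)
    · simp only [g, dif_neg hr]
      omega
  · rintro (hn | hn)
    · obtain ⟨⟨k, hk⟩, rfl⟩ : n ∈ range e := by rwa [S.range_orderEmbOfFin hcard]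
      refine ⟨N - 1 - k, ?_⟩
      simp only [g, dif_pos (show N - 1 - k < N by omega)]
      congr 2
      omega
    · refine ⟨(-n - 1).toNat, ?_⟩
      simp only [g, dif_neg (show ¬ (-n - 1).toNat < N by omega)]
      omega

theorem exists_betaSet_eq_insert_sdiff (l : Partition') {b c : ℤ} (hb : b ∈ l.betaSet)
    (hc : c ∉ l.betaSet) : ∃ m : Partition', m.betaSet = insert c (l.betaSet \ {b}) := by
  obtain ⟨N₀, hN₀⟩ := l.exists_parts_eq_zero
  set N := max N₀ (max (-b).toNat (-c).toNat)
  have hN : ∀ r, N ≤ r → l.parts r = 0 := fun r hr => hN₀ r (by omega)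
  set S := (Finset.range N).image l.bead
  have hβ : l.betaSet = ↑S ∪ Iio (-(N : ℤ)) := betaSet_eq_union hN
  have hbS : b ∈ S := by
    rw [hβ, mem_union, mem_Iio] at hb
    exact hb.resolve_right (by omega)
  have hcS : c ∉ S := fun h => hc (hβ ▸ Or.inl h)
  have hcard : (insert c (S.erase b)).card = N := by
    have hpos := Finset.card_pos.2 ⟨b, hbS⟩
    rw [card_image_bead] at hpos
    rw [Finset.card_insert_of_notMem (by simp [hcS]), Finset.card_erase_of_mem hbS,
      card_image_bead]
    omega
  obtain ⟨m, hm⟩ := exists_betaSet_eq (insert c (S.erase b)) hcard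
    (fun n hn => by
      rcases Finset.mem_insert.1 hn with rfl | hn
      · omega
      · exact neg_le_of_mem_image_bead (Finset.mem_of_mem_erase hn))
  refine ⟨m, ?_⟩
  rw [hm, hβ]
  ext n
  simp only [Finset.coe_insert, Finset.coe_erase, mem_union, mem_insert_iff, mem_sdiff,
    Finset.mem_coe, mem_singleton_iff, mem_Iio]
  constructor
  · rintro ((rfl | ⟨hn, hnb⟩) | hn)
    · exact Or.inl rfl
    · exact Or.inr ⟨Or.inl hn, hnb⟩
    · exact Or.inr ⟨Or.inr hn, by omega⟩
  · rintro (rfl | ⟨hn | hn, hnb⟩)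
    · exact Or.inl (Or.inl rfl)
    · exact Or.inl (Or.inr ⟨hn, hnb⟩)
    · exact Or.inr hn

variable {h : ℕ}

theorem RemoveHook.coreSize_eq (hh : 0 < h) {l m : Partition'} (hlm : RemoveHook h l m) :
    coreSize h m.betaSet = coreSize h l.betaSet := by
  obtain ⟨b, hb, hbh, hm⟩ := hlm
  rw [hm, ← preimage_swap_eq_insert_sdiff hbh hb]
  simpa using coreSize_preimage_swap hh l.isBeadSet_betaSet (b - h)

theorem IsCore.hookCount_eq_zero {c : Partition'} (hc : IsCore h c) :
    hookCount h c.betaSet = 0 := by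
  rw [hookCount, ncard_eq_zero (c.isBeadSet_betaSet.finite_hookPairs h)]
  refine eq_empty_of_forall_notMem fun ⟨x, y⟩ ⟨hx, hy, hxy, k, hk⟩ => ?_
  have hk1 : 1 ≤ k := by
    by_contra hk1
    nlinarith
  -- walking down from the bead `y` in steps of `h` we must leave the beta-set before `x`
  have hex : ∃ j : ℕ, y - (j + 1) * h ∉ c.betaSet :=
    ⟨(k - 1).toNat, by rwa [Int.toNat_of_nonneg (by omega), sub_add_cancel, mul_comm, ← hk,
      sub_sub_cancel]⟩
  classical
  set j := Nat.find hex
  have hbead : y - j * h ∈ c.betaSet := by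
    rcases Nat.eq_zero_or_pos j with hj | hj
    · simpa [hj] using hy
    · have := Nat.find_min hex (show j - 1 < j by omega)
      rwa [not_not, Nat.cast_sub hj, Nat.cast_one, sub_add_cancel] at this
  have hgap : y - j * h - h ∉ c.betaSet := by
    rw [sub_sub, ← add_one_mul]
    exact Nat.find_spec hex
  obtain ⟨m, hm⟩ := c.exists_betaSet_eq_insert_sdiff hbead hgap
  exact hc m ⟨_, hbead, hgap, hm⟩

theorem HasCore.size_eq (hh : 0 < h) {l c : Partition'} (hlc : HasCore h l c) :
    (c.size : ℤ) = coreSize h l.betaSet := by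
  obtain ⟨hchain, hcore⟩ := hlc
  have hcs : coreSize h c.betaSet = coreSize h l.betaSet := by
    clear hcore
    induction hchain with
    | refl => rfl
    | tail _ hstep ih => rw [hstep.coreSize_eq hh, ih]
  rw [← hcs, coreSize, hcore.hookCount_eq_zero, size_eq_beadSize, Nat.cast_zero, mul_zero,
    sub_zero]

theorem sub_size_sub_size_eq_excess {s t : ℕ} (hs : 0 < s) (ht : 0 < t) {l cs ct : Partition'}
    (hls : HasCore s l cs) (hlt : HasCore t l ct) :
    (l.size : ℤ) - cs.size - ct.size = excess s t l.betaSet := by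
  rw [hls.size_eq hs, hlt.size_eq ht, size_eq_beadSize, excess]

end Partition'

/-- the quantity `|λ| − |core_s(λ)| − |core_t(λ)|` is invariant
under the action of `W_s × W_t` (with `W_s` acting at level `t` and `W_t` at
level `s`, via beta-sets). -/
theorem stmt18 (s t : ℕ) (hs : 1 < s) (ht : 1 < t) (hst : Nat.Coprime s t)
    (u v : Function.End ℤ) (hu : u ∈ WMon s t) (hv : v ∈ WMon t s)
    (l m : Partition') (hact : m.betaSet = (fun b => u (v b)) '' l.betaSet)
    (cs ct cs' ct' : Partition')
    (h1 : Partition'.HasCore s l cs) (h2 : Partition'.HasCore t l ct)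
    (h3 : Partition'.HasCore s m cs') (h4 : Partition'.HasCore t m ct') :
    (l.size : ℤ) - cs.size - ct.size = (m.size : ℤ) - cs'.size - ct'.size := by
  obtain ⟨hvl, hv⟩ := l.isBeadSet_betaSet.excess_image_of_mem_wMon ht hs hst.symm hv
  obtain ⟨-, hu⟩ := hvl.excess_image_of_mem_wMon hs ht hst hu
  have hm : m.betaSet = u '' (v '' l.betaSet) := hact.trans (image_image (u : ℤ → ℤ) v _).symm
  rw [Partition'.sub_size_sub_size_eq_excess (by omega) (by omega) h1 h2,
    Partition'.sub_size_sub_size_eq_excess (by omega) (by omega) h3 h4, hm, hu,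
    excess_comm s t (v '' _), hv, excess_comm]
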